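/- arXiv:2311.11890 — 2 statements merged into one kernel-verified Lean document; each statement's English description precedes it below -/
import Mathlib

section
/- Let X be a finite type with N elements and let r satisfy 1 ≤ r ≤ N. Let μ be the PMF on (X → Bool) × X obtained by first drawing f uniformly from F^r(X) and then drawing x uniformly from the (nonempty) set {x : f x = true}, outputting the pair (f, x). Let ν be the PMF obtained by first drawing g uniformly from F^{r-1}(X) and then drawing y uniformly from the (nonempty) set {y : g y = false}, outputting the pair (Function.update g y true, y). Then μ = ν. -/
/-!
Each two-stage uniform draw is the uniform distribution on the sigma type of its pairs, pushed
forward to `(X → Bool) × X`, because the second stage always has the same number of choices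
(`r`, resp. `card X - (r - 1)`). The map `(f, x) ↦ (update f x false, x)` is a bijection between
the two sigma types that intertwines the two push-forwards, so the distributions agree.
-/

open Finset Function

instance Sigma.instNonemptyOfForall {α : Type*} {β : α → Type*} [h : Nonempty α]
    [∀ a, Nonempty (β a)] : Nonempty (Σ a, β a) :=
  h.elim fun a => ⟨⟨a, Classical.arbitrary _⟩⟩

namespace PMF

theorem map_uniformOfFintype_equiv {α β : Type*} [Fintype α] [Fintype β] [Nonempty α]
    [Nonempty β] (e : α ≃ β) : (uniformOfFintype α).map e = uniformOfFintype β := by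
  ext b
  rw [map_apply, tsum_eq_single (e.symm b)]
  · simp [Fintype.card_congr e]
  · intro a ha
    rw [if_neg (fun h => ha (e.symm_apply_eq.mpr h).symm)]

theorem uniformOfFintype_bind_map_sigmaMk {α : Type*} {β : α → Type*} [Fintype α]
    [Nonempty α] [∀ a, Fintype (β a)] [∀ a, Nonempty (β a)] {k : ℕ}
    (hk : ∀ a, Fintype.card (β a) = k) :
    (uniformOfFintype α).bind (fun a => (uniformOfFintype (β a)).map (Sigma.mk a))
      = uniformOfFintype (Σ a, β a) := by
  ext ⟨a, b⟩
  rw [bind_apply, tsum_eq_single a, map_apply, tsum_eq_single b]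
  · simp [hk, ENNReal.mul_inv]
  · intro b' hb'
    rw [if_neg (fun h => hb' (sigma_mk_injective h).symm)]
  · intro a' ha'
    rw [map_apply, ENNReal.tsum_eq_zero.mpr, mul_zero]
    intro b'
    rw [if_neg (fun h => ha' (congrArg Sigma.fst h).symm)]

theorem uniformOfFintype_bind_map {α γ : Type*} {β : α → Type*} [Fintype α] [Nonempty α]
    [∀ a, Fintype (β a)] [∀ a, Nonempty (β a)] {k : ℕ} (hk : ∀ a, Fintype.card (β a) = k)
    (F : ∀ a, β a → γ) :
    (uniformOfFintype α).bind (fun a => (uniformOfFintype (β a)).map (F a))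
      = (uniformOfFintype (Σ a, β a)).map (fun p => F p.1 p.2) := by
  rw [← uniformOfFintype_bind_map_sigmaMk hk, map_bind]
  simp only [map_comp]
  rfl

end PMF

section BoolFun

variable {X : Type*} [Fintype X]

variable (X) in
abbrev boolFunsOfCard (t : ℕ) : Type _ :=
  {f : X → Bool // (univ.filter fun x => f x = true).card = t}

theorem boolFunsOfCard.card_true {t : ℕ} (f : boolFunsOfCard X t) :
    Fintype.card {x // f.1 x = true} = t := by
  rw [Fintype.card_subtype, f.2]

theorem boolFunsOfCard.card_false {t : ℕ} (f : boolFunsOfCard X t) :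
    Fintype.card {x // f.1 x = false} = Fintype.card X - t := by
  simp only [← Bool.not_eq_true]
  rw [Fintype.card_subtype_compl, boolFunsOfCard.card_true]

variable [DecidableEq X]

theorem filter_update_true (f : X → Bool) (x : X) :
    univ.filter (fun z => update f x true z = true)
      = insert x (univ.filter fun z => f z = true) := by
  ext z
  by_cases hz : z = x <;> simp [hz]

theorem filter_update_false (f : X → Bool) (x : X) :
    univ.filter (fun z => update f x false z = true)
      = (univ.filter fun z => f z = true).erase x := by
  ext z
  by_cases hz : z = x <;> simp [hz]

def removeTrueEquiv {r : ℕ} (hr : 1 ≤ r) :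
    (Σ f : boolFunsOfCard X r, {x // f.1 x = true})
      ≃ Σ g : boolFunsOfCard X (r - 1), {y // g.1 y = false} where
  toFun p := ⟨⟨update p.1.1 p.2.1 false, by
      rw [filter_update_false, card_erase_of_mem (by simpa using p.2.2), p.1.2]⟩,
    ⟨p.2.1, by simp⟩⟩
  invFun p := ⟨⟨update p.1.1 p.2.1 true, by
      rw [filter_update_true, card_insert_of_notMem (by simpa using p.2.2), p.1.2]; omega⟩,
    ⟨p.2.1, by simp⟩⟩
  left_inv p := Sigma.subtype_ext (Subtype.ext (by simp [← p.2.2])) rfl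
  right_inv p := Sigma.subtype_ext (Subtype.ext (by simp [← p.2.2])) rfl

end BoolFun

theorem stmt_4_general (X : Type) [Fintype X] [DecidableEq X] (r : ℕ)
    (hr1 : 1 ≤ r)
    (hF : Nonempty {f : X → Bool // (Finset.univ.filter fun x => f x = true).card = r})
    (hG : Nonempty {g : X → Bool // (Finset.univ.filter fun x => g x = true).card = r - 1})
    (hTf : ∀ f : {f : X → Bool // (Finset.univ.filter fun x => f x = true).card = r},
        Nonempty {x : X // f.1 x = true})
    (hTg : ∀ g : {g : X → Bool // (Finset.univ.filter fun x => g x = true).card = r - 1},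
        Nonempty {y : X // g.1 y = false}) :
    ((@PMF.uniformOfFintype
        {f : X → Bool // (Finset.univ.filter fun x => f x = true).card = r} _ hF).bind
      fun f =>
        (@PMF.uniformOfFintype {x : X // f.1 x = true} _ (hTf f)).map
          fun x => ((f.1, x.1) : (X → Bool) × X))
      =
    ((@PMF.uniformOfFintype
        {g : X → Bool // (Finset.univ.filter fun x => g x = true).card = r - 1} _ hG).bind
      fun g =>
        (@PMF.uniformOfFintype {y : X // g.1 y = false} _ (hTg g)).map
          fun y => ((Function.update g.1 y.1 true, y.1) : (X → Bool) × X)) := by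
  rw [PMF.uniformOfFintype_bind_map boolFunsOfCard.card_true,
    PMF.uniformOfFintype_bind_map boolFunsOfCard.card_false,
    ← PMF.map_uniformOfFintype_equiv (removeTrueEquiv hr1), PMF.map_comp]
  congr 1
  funext p
  simp [removeTrueEquiv, ← p.2.2]

/-- drawing `f` uniformly from `F^r(X)` and then `x` uniformly from
`{x | f x = true}` gives the same joint distribution on pairs `(f, x)` as drawing
`g` uniformly from `F^{r-1}(X)`, then `y` uniformly from `{y | g y = false}`, and
outputting `(Function.update g y true, y)`. -/
theorem stmt_4 (X : Type) [Fintype X] [DecidableEq X] (N r : ℕ)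
    (hN : Fintype.card X = N) (hr1 : 1 ≤ r) (hrN : r ≤ N)
    (hF : Nonempty {f : X → Bool // (Finset.univ.filter fun x => f x = true).card = r})
    (hG : Nonempty {g : X → Bool // (Finset.univ.filter fun x => g x = true).card = r - 1})
    (hTf : ∀ f : {f : X → Bool // (Finset.univ.filter fun x => f x = true).card = r},
        Nonempty {x : X // f.1 x = true})
    (hTg : ∀ g : {g : X → Bool // (Finset.univ.filter fun x => g x = true).card = r - 1},
        Nonempty {y : X // g.1 y = false}) :
    ((@PMF.uniformOfFintype
        {f : X → Bool // (Finset.univ.filter fun x => f x = true).card = r} _ hF).bind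
      fun f =>
        (@PMF.uniformOfFintype {x : X // f.1 x = true} _ (hTf f)).map
          fun x => ((f.1, x.1) : (X → Bool) × X))
      =
    ((@PMF.uniformOfFintype
        {g : X → Bool // (Finset.univ.filter fun x => g x = true).card = r - 1} _ hG).bind
      fun g =>
        (@PMF.uniformOfFintype {y : X // g.1 y = false} _ (hTg g)).map
          fun y => ((Function.update g.1 y.1 true, y.1) : (X → Bool) × X)) :=
  stmt_4_general X r hr1 hF hG hTf hTg
end

section
/- Let X be a finite type with N elements and let t satisfy 0 ≤ t ≤ N − 1. Let μ be the PMF on (X → Bool) × X obtained by drawing g uniformly from F^t(X) and, independently, y uniformly from X, outputting (g, y). Let ν be the PMF obtained by drawing g uniformly from F^t(X) and then drawing y uniformly from the (nonempty) set {y : g y = false}, outputting (g, y). Then for every set E of pairs, |μ(E) − ν(E)| ≤ t / N. -/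
/-!
Both distributions draw `g` in the same way, so it suffices to compare, for each fixed `g`,
the uniform distribution on `X` with the uniform distribution on `S = {y | g y = false}`, a set
of size `N - t`. For an event `A`, with `a = |A|` and `i = |A ∩ S|`, these give `a / N` and
`i / |S|`; since `i ≤ a`, `i ≤ |S|` and `a + |S| ≤ N + i`, the two differ by at most
`1 - |S| / N = t / N`.
-/

open Finset
open scoped ENNReal

theorem abs_div_sub_div_le_one_sub_div {a i s n : ℝ} (hi : 0 ≤ i) (hs : 0 < s) (hsn : s ≤ n)
    (hia : i ≤ a) (his : i ≤ s) (hunion : a + s ≤ n + i) :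
    |a / n - i / s| ≤ 1 - s / n := by
  have hn : 0 < n := hs.trans_le hsn
  rw [abs_sub_le_iff]
  constructor
  · calc a / n - i / s ≤ a / n - i / n := by gcongr
      _ ≤ (n - s) / n := by rw [← sub_div]; exact div_le_div_of_nonneg_right (by linarith) hn.le
      _ = 1 - s / n := by field_simp
  · calc i / s - a / n ≤ i / s - i / n := by gcongr
      _ = i / s * ((n - s) / n) := by field_simp
      _ ≤ 1 - s / n := by
          rw [one_sub_div hn.ne']
          exact mul_le_of_le_one_left (div_nonneg (by linarith) hn.le) (div_le_one_of_le₀ his hs.le)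

theorem abs_card_div_card_sub_card_inter_div_card_le {X : Type*} [Fintype X] [DecidableEq X]
    (A S : Finset X) (hS : S.Nonempty) :
    |(#A : ℝ) / Fintype.card X - #(A ∩ S) / #S| ≤ 1 - (#S : ℝ) / Fintype.card X := by
  have hunion : #A + #S ≤ Fintype.card X + #(A ∩ S) := by
    rw [← card_union_add_card_inter]
    exact Nat.add_le_add_right (card_le_univ _) _
  refine abs_div_sub_div_le_one_sub_div (Nat.cast_nonneg _) (by exact_mod_cast hS.card_pos)
    (by exact_mod_cast card_le_univ S) (by exact_mod_cast card_le_card inter_subset_left)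
    (by exact_mod_cast card_le_card inter_subset_right) (by exact_mod_cast hunion)

namespace PMF

variable {α β : Type*}

theorem toOuterMeasure_apply_ne_top (p : PMF α) (s : Set α) : p.toOuterMeasure s ≠ ∞ := by
  rw [toOuterMeasure_apply]
  exact ne_top_of_le_ne_top p.tsum_coe_ne_top
    (ENNReal.tsum_le_tsum (Set.indicator_le_self s p))

theorem toOuterMeasure_bind_le_add {p : PMF α} {κ₁ κ₂ : α → PMF β} {s : Set β} {ε : ℝ≥0∞}
    (h : ∀ a, (κ₁ a).toOuterMeasure s ≤ (κ₂ a).toOuterMeasure s + ε) :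
    (p.bind κ₁).toOuterMeasure s ≤ (p.bind κ₂).toOuterMeasure s + ε := by
  simp only [toOuterMeasure_bind_apply]
  calc ∑' a, p a * (κ₁ a).toOuterMeasure s
      ≤ ∑' a, (p a * (κ₂ a).toOuterMeasure s + p a * ε) :=
        ENNReal.tsum_le_tsum fun a => by rw [← mul_add]; gcongr; exact h a
    _ = ∑' a, p a * (κ₂ a).toOuterMeasure s + ε := by
        rw [ENNReal.tsum_add, ENNReal.tsum_mul_right, p.tsum_coe, one_mul]

theorem toReal_toOuterMeasure_bind_le_add {p : PMF α} {κ₁ κ₂ : α → PMF β} {s : Set β} {ε : ℝ}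
    (hε : 0 ≤ ε)
    (h : ∀ a, ((κ₁ a).toOuterMeasure s).toReal ≤ ((κ₂ a).toOuterMeasure s).toReal + ε) :
    ((p.bind κ₁).toOuterMeasure s).toReal ≤ ((p.bind κ₂).toOuterMeasure s).toReal + ε := by
  have key : ∀ q r : PMF β, (q.toOuterMeasure s).toReal ≤ (r.toOuterMeasure s).toReal + ε ↔
      q.toOuterMeasure s ≤ r.toOuterMeasure s + ENNReal.ofReal ε := fun q r => by
    rw [← ENNReal.toReal_le_toReal (q.toOuterMeasure_apply_ne_top s)
      (ENNReal.add_ne_top.2 ⟨r.toOuterMeasure_apply_ne_top s, ENNReal.ofReal_ne_top⟩),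
      ENNReal.toReal_add (r.toOuterMeasure_apply_ne_top s) ENNReal.ofReal_ne_top,
      ENNReal.toReal_ofReal hε]
  exact (key _ _).2 (toOuterMeasure_bind_le_add fun a => (key _ _).1 (h a))

theorem abs_toReal_toOuterMeasure_bind_sub_le {p : PMF α} {κ₁ κ₂ : α → PMF β} {s : Set β}
    {ε : ℝ}
    (h : ∀ a, |((κ₁ a).toOuterMeasure s).toReal - ((κ₂ a).toOuterMeasure s).toReal| ≤ ε) :
    |((p.bind κ₁).toOuterMeasure s).toReal - ((p.bind κ₂).toOuterMeasure s).toReal| ≤ ε := by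
  obtain ⟨a, -⟩ := p.support_nonempty
  have hε : 0 ≤ ε := (abs_nonneg _).trans (h a)
  simp only [abs_sub_le_iff, sub_le_iff_le_add'] at h ⊢
  exact ⟨toReal_toOuterMeasure_bind_le_add hε fun a => (h a).1,
    toReal_toOuterMeasure_bind_le_add hε fun a => (h a).2⟩

theorem abs_toReal_uniformOfFintype_sub_subtype_le {X : Type*} [Fintype X] [Nonempty X]
    (p : X → Prop) [Fintype {x // p x}] [Nonempty {x // p x}] (A : Set X) :
    |((uniformOfFintype X).toOuterMeasure A).toReal -
        ((uniformOfFintype {x // p x}).toOuterMeasure (Subtype.val ⁻¹' A)).toReal| ≤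
      1 - (Fintype.card {x // p x} : ℝ) / Fintype.card X := by
  classical
  have hpreimage : Fintype.card (Subtype.val ⁻¹' A : Set {x // p x}) =
      #(A.toFinset ∩ univ.filter p) := by
    rw [← Nat.card_eq_fintype_card]
    refine (Nat.card_congr (Equiv.subtypeSubtypeEquivSubtypeInter p (· ∈ A))).trans ?_
    rw [Nat.card_eq_fintype_card, Fintype.card_subtype]
    congr 1; ext x; simp [and_comm]
  have hne : (univ.filter p).Nonempty := by
    obtain ⟨x, hx⟩ := ‹Nonempty {x // p x}›
    exact ⟨x, by simpa using hx⟩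
  simp only [toOuterMeasure_uniformOfFintype_apply, ENNReal.toReal_div, ENNReal.toReal_natCast,
    hpreimage, ← Set.toFinset_card, Fintype.card_subtype p]
  exact abs_card_div_card_sub_card_inter_div_card_le _ _ hne

end PMF

theorem stmt_5_general (X : Type) [Fintype X] [DecidableEq X] (N t : ℕ)
    (hN : Fintype.card X = N)
    (hX : Nonempty X)
    (hF : Nonempty {g : X → Bool // (Finset.univ.filter fun x => g x = true).card = t})
    (hT : ∀ g : {g : X → Bool // (Finset.univ.filter fun x => g x = true).card = t},
        Nonempty {y : X // g.1 y = false}) :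
    let μ : PMF ((X → Bool) × X) :=
      (@PMF.uniformOfFintype
          {g : X → Bool // (Finset.univ.filter fun x => g x = true).card = t} _ hF).bind
        fun g => (@PMF.uniformOfFintype X _ hX).map fun y => (g.1, y)
    let ν : PMF ((X → Bool) × X) :=
      (@PMF.uniformOfFintype
          {g : X → Bool // (Finset.univ.filter fun x => g x = true).card = t} _ hF).bind
        fun g => (@PMF.uniformOfFintype {y : X // g.1 y = false} _ (hT g)).map
          fun y => (g.1, y.1)
    ∀ E : Set ((X → Bool) × X),
      |(μ.toOuterMeasure E).toReal - (ν.toOuterMeasure E).toReal| ≤ (t : ℝ) / (N : ℝ) := by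
  intro μ ν E
  refine PMF.abs_toReal_toOuterMeasure_bind_sub_le fun g => ?_
  simp only [PMF.toOuterMeasure_map_apply]
  have hcard : Fintype.card {y // g.1 y = false} + t = N := by
    have hsplit := card_filter_add_card_filter_not (s := univ) (fun y => g.1 y = false)
    simp only [Bool.not_eq_false, g.2, card_univ, hN] at hsplit
    rwa [Fintype.card_subtype]
  calc _ ≤ 1 - (Fintype.card {y // g.1 y = false} : ℝ) / Fintype.card X :=
        PMF.abs_toReal_uniformOfFintype_sub_subtype_le (fun y => g.1 y = false) _
    _ = t / N := by
        rw [hN, ← hcard]; push_cast; field_simp; ring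

/-- the pair `(g, y)` with `g` uniform on `F^t(X)` and `y` uniform on `X`
(independent) is within total-variation distance `t / N` of the pair `(g, y)` with `g`
uniform on `F^t(X)` and then `y` uniform on `{y | g y = false}`. -/
theorem stmt_5 (X : Type) [Fintype X] [DecidableEq X] (N t : ℕ)
    (hN : Fintype.card X = N) (hN1 : 1 ≤ N) (htN : t ≤ N - 1)
    (hX : Nonempty X)
    (hF : Nonempty {g : X → Bool // (Finset.univ.filter fun x => g x = true).card = t})
    (hT : ∀ g : {g : X → Bool // (Finset.univ.filter fun x => g x = true).card = t},
        Nonempty {y : X // g.1 y = false}) :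
    let μ : PMF ((X → Bool) × X) :=
      (@PMF.uniformOfFintype
          {g : X → Bool // (Finset.univ.filter fun x => g x = true).card = t} _ hF).bind
        fun g => (@PMF.uniformOfFintype X _ hX).map fun y => (g.1, y)
    let ν : PMF ((X → Bool) × X) :=
      (@PMF.uniformOfFintype
          {g : X → Bool // (Finset.univ.filter fun x => g x = true).card = t} _ hF).bind
        fun g => (@PMF.uniformOfFintype {y : X // g.1 y = false} _ (hT g)).map
          fun y => (g.1, y.1)
    ∀ E : Set ((X → Bool) × X),
      |(μ.toOuterMeasure E).toReal - (ν.toOuterMeasure E).toReal| ≤ (t : ℝ) / (N : ℝ) :=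
  stmt_5_general X N t hN hX hF hT
end
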